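/- Let c > 0 and let α : ℝ → ℝ be twice continuously differentiable. For every x ∈ ℝ², the determinant of the Jacobian (Fréchet derivative) of G at x equals 1 + (4/√2)|x₁ - x₂| φ((x₁ - x₂)/(√2 c)) α((x₁ + x₂)/2) + (1/c)(x₁ - x₂)|x₁ - x₂| φ'((x₁ - x₂)/(√2 c)) α((x₁ + x₂)/2). -/

import Mathlib

noncomputable section

/-- `φ(u) = (1 - u²)⁴` for `|u| ≤ 1` and `φ(u) = 0` for `|u| > 1`. -/
def phi (u : ℝ) : ℝ := if |u| ≤ 1 then (1 - u^2)^4 else 0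

/-- The sign function: `1` for positive, `-1` for negative, `0` at `0`. -/
def sgn (u : ℝ) : ℝ := if 0 < u then 1 else if u < 0 then -1 else 0

/-- The plane with the Euclidean norm. -/
abbrev E2 := EuclideanSpace ℝ (Fin 2)

/-- The vector `(a, b)` of `ℝ²`. -/
def vec2 (a b : ℝ) : E2 := (WithLp.equiv 2 (Fin 2 → ℝ)).symm ![a, b]

/-- `φ̃(x) = φ((x₁ - x₂)/(√2 c)) · α((x₁ + x₂)/2)`. -/
def phiT (c : ℝ) (α : ℝ → ℝ) (x : E2) : ℝ :=
  phi ((x 0 - x 1) / (Real.sqrt 2 * c)) * α ((x 0 + x 1) / 2)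

/-- `G(x) = x + (1/√2)(x₁ - x₂)² sgn(x₁ - x₂) φ̃(x) · (1, -1)`. -/
def Gmap (c : ℝ) (α : ℝ → ℝ) (x : E2) : E2 :=
  x + ((1 / Real.sqrt 2) * (x 0 - x 1)^2 * sgn (x 0 - x 1) * phiT c α x) • vec2 1 (-1)

lemma hasDerivAt_mul_abs (t : ℝ) : HasDerivAt (fun x : ℝ => x * |x|) (2 * |t|) t := by
  rcases lt_trichotomy t 0 with h | h | h
  · have h1 : HasDerivAt (fun x : ℝ => -(x * x)) (2 * |t|) t :=
      (((hasDerivAt_id t).mul (hasDerivAt_id t)).neg).congr_deriv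
        (by simp only [id_eq, abs_of_neg h]; ring)
    refine h1.congr_of_eventuallyEq ?_
    filter_upwards [Iio_mem_nhds h] with y hy
    rw [abs_of_neg hy]; ring
  · subst h
    rw [hasDerivAt_iff_tendsto_slope]
    have key : ∀ y ∈ ({(0:ℝ)}ᶜ : Set ℝ), |y| = slope (fun x : ℝ => x * |x|) 0 y := by
      intro y hy
      simp only [Set.mem_compl_iff, Set.mem_singleton_iff] at hy
      rw [slope_def_field, eq_div_iff (sub_ne_zero.mpr hy)]; simp only [abs_zero, mul_zero, sub_zero]; ring
    have habs : Filter.Tendsto (fun y : ℝ => |y|) (nhdsWithin 0 {(0:ℝ)}ᶜ)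
        (nhds (2 * |(0:ℝ)|)) := by
      simpa using (continuous_abs.tendsto (0:ℝ)).mono_left nhdsWithin_le_nhds
    exact habs.congr' (eventually_nhdsWithin_of_forall key)
  · have h1 : HasDerivAt (fun x : ℝ => x * x) (2 * |t|) t :=
      ((hasDerivAt_id t).mul (hasDerivAt_id t)).congr_deriv
        (by simp only [id_eq, abs_of_pos h]; ring)
    refine h1.congr_of_eventuallyEq ?_
    filter_upwards [Ioi_mem_nhds h] with y hy
    rw [abs_of_pos hy]

/-- A globally valid formula for the derivative of `phi`. -/
def phiD (u : ℝ) : ℝ := (2*(1-u^2)^3 + 2*(1-u^2)^2*|1-u^2|) * (-2*u)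

lemma phi_eq (u : ℝ) :
    phi u = ((1-u^2)^4 + (1-u^2)^2 * ((1-u^2) * |1-u^2|)) / 2 := by
  unfold phi
  rcases le_or_gt |u| 1 with h | h
  · rw [if_pos h, abs_of_nonneg (by nlinarith [sq_abs u, abs_nonneg u] : (0:ℝ) ≤ 1 - u^2)]
    ring
  · rw [if_neg (not_le.2 h), abs_of_neg (by nlinarith [sq_abs u] : 1 - u^2 < 0)]
    ring

lemma hasDerivAt_phi (u : ℝ) : HasDerivAt phi (phiD u) u := by
  have ht : HasDerivAt (fun v : ℝ => 1 - v^2) (-2*u) u := by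
    simpa using ((hasDerivAt_pow 2 u).const_sub 1)
  have hm : HasDerivAt (fun t : ℝ => (t^4 + t^2 * (t * |t|))/2)
      (2*(1-u^2)^3 + 2*(1-u^2)^2*|1-u^2|) (1-u^2) := by
    have h1 := hasDerivAt_pow 4 (1-u^2)
    have h2 := (hasDerivAt_pow 2 (1-u^2)).mul (hasDerivAt_mul_abs (1-u^2))
    exact ((h1.add h2).div_const 2).congr_deriv (by ring)
  have hcomp := hm.comp u ht
  refine HasDerivAt.congr_of_eventuallyEq (hcomp.congr_deriv (by unfold phiD; ring)) ?_
  filter_upwards with v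
  simpa [Function.comp] using phi_eq v

lemma sq_sgn_eq (d : ℝ) : d^2 * sgn d = d * |d| := by
  unfold sgn
  rcases lt_trichotomy d 0 with h | h | h
  · rw [if_neg (by linarith), if_pos h, abs_of_neg h]; ring
  · simp [h]
  · rw [if_pos h, abs_of_pos h]; ring

lemma det_formula (L : E2 →L[ℝ] ℝ) :
    (ContinuousLinearMap.id ℝ E2 + L.smulRight (vec2 1 (-1))).det =
      1 + (L (EuclideanSpace.single 0 1) - L (EuclideanSpace.single 1 1)) := by
  rw [ContinuousLinearMap.det,
    ← LinearMap.det_toMatrix (EuclideanSpace.basisFun (Fin 2) ℝ).toBasis, Matrix.det_fin_two]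
  simp [LinearMap.toMatrix_apply, vec2, EuclideanSpace.single_apply, WithLp.equiv_symm_apply]
  ring

/-- For `c > 0` and `α` twice continuously differentiable, the determinant of the
Jacobian of `G` at `x` equals
`1 + (4/√2)|x₁ - x₂| φ((x₁-x₂)/(√2 c)) α((x₁+x₂)/2)
   + (1/c)(x₁ - x₂)|x₁ - x₂| φ'((x₁-x₂)/(√2 c)) α((x₁+x₂)/2)`. -/
theorem stmt_7 (c : ℝ) (hc : 0 < c) (α : ℝ → ℝ) (hα : ContDiff ℝ 2 α) :
    ∀ x : E2,
      (fderiv ℝ (Gmap c α) x).det =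
        1 + (4 / Real.sqrt 2) * |x 0 - x 1| * phi ((x 0 - x 1) / (Real.sqrt 2 * c)) *
              α ((x 0 + x 1) / 2)
          + (1 / c) * (x 0 - x 1) * |x 0 - x 1| *
              deriv phi ((x 0 - x 1) / (Real.sqrt 2 * c)) * α ((x 0 + x 1) / 2) := by
  intro x
  have hs2 : (0:ℝ) < Real.sqrt 2 := by positivity
  have hs2' : Real.sqrt 2 * Real.sqrt 2 = 2 := Real.mul_self_sqrt (by norm_num)
  have hcne : c ≠ 0 := ne_of_gt hc
  have hsne : Real.sqrt 2 ≠ 0 := ne_of_gt hs2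
  set d : ℝ := x 0 - x 1 with hd_def
  set s : ℝ := x 0 + x 1 with hs_def
  set u : ℝ := d / (Real.sqrt 2 * c) with hu_def
  set P0 : E2 →L[ℝ] ℝ := EuclideanSpace.proj 0 with hP0
  set P1 : E2 →L[ℝ] ℝ := EuclideanSpace.proj 1 with hP1
  set D : E2 →L[ℝ] ℝ := P0 - P1 with hD
  set S : E2 →L[ℝ] ℝ := P0 + P1 with hS
  have hDapp : ∀ y : E2, D y = y 0 - y 1 := fun y => rfl
  have hSapp : ∀ y : E2, S y = y 0 + y 1 := fun y => rfl
  have hDx : HasFDerivAt (fun y : E2 => y 0 - y 1) D x := D.hasFDerivAt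
  have hSx : HasFDerivAt (fun y : E2 => y 0 + y 1) S x := S.hasFDerivAt
  have hq : HasDerivAt (fun t : ℝ => (1 / Real.sqrt 2) * ((t * |t|) * phi (t / (Real.sqrt 2 * c))))
      ((1 / Real.sqrt 2) * ((2 * |d|) * phi u + (d * |d|) * (phiD u * (Real.sqrt 2 * c)⁻¹))) d := by
    have h1 := hasDerivAt_mul_abs d
    have h2 : HasDerivAt (fun t : ℝ => phi (t / (Real.sqrt 2 * c)))
        (phiD u * (Real.sqrt 2 * c)⁻¹) d := by
      have := (hasDerivAt_phi u).comp d ((hasDerivAt_id d).div_const (Real.sqrt 2 * c))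
      simpa [Function.comp_def, div_eq_mul_inv] using this
    exact ((h1.mul h2).const_mul (1 / Real.sqrt 2)).congr_deriv (by ring)
  have hαd : Differentiable ℝ α := hα.differentiable (by norm_num)
  have ha : HasDerivAt (fun r : ℝ => α (r / 2)) (deriv α (s / 2) * (2:ℝ)⁻¹) s := by
    have := ((hαd (s/2)).hasDerivAt).comp s ((hasDerivAt_id s).div_const 2)
    simpa [Function.comp_def, div_eq_mul_inv] using this
  set L : E2 →L[ℝ] ℝ :=
    (α (s/2) * ((1 / Real.sqrt 2) *
        ((2 * |d|) * phi u + (d * |d|) * (phiD u * (Real.sqrt 2 * c)⁻¹)))) • D +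
      ((1 / Real.sqrt 2) * ((d * |d|) * phi u) * (deriv α (s / 2) * (2:ℝ)⁻¹)) • S with hL
  have hF : HasFDerivAt
      (fun y : E2 => ((1 / Real.sqrt 2) * (((y 0 - y 1) * |y 0 - y 1|) *
        phi ((y 0 - y 1) / (Real.sqrt 2 * c)))) * α ((y 0 + y 1) / 2)) L x := by
    have h := (hq.comp_hasFDerivAt x hDx).mul (ha.comp_hasFDerivAt x hSx)
    refine h.congr_fderiv ?_
    ext y
    simp only [hL, Function.comp_apply, Function.comp, ContinuousLinearMap.add_apply,
      ContinuousLinearMap.coe_smul', Pi.smul_apply, smul_eq_mul,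
      ContinuousLinearMap.smulRight_apply]
    ring
  set v : E2 := vec2 1 (-1) with hv
  set A : E2 →L[ℝ] E2 := ContinuousLinearMap.id ℝ E2 + L.smulRight v with hA
  have hG : HasFDerivAt (Gmap c α) A x := by
    have h0 := (hasFDerivAt_id x).add (hF.smul_const v)
    refine (h0.congr_of_eventuallyEq ?_)
    filter_upwards with y
    unfold Gmap phiT
    congr 1
    rw [show (1 / Real.sqrt 2) * (y 0 - y 1)^2 * sgn (y 0 - y 1) *
        (phi ((y 0 - y 1) / (Real.sqrt 2 * c)) * α ((y 0 + y 1) / 2)) =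
        ((y 0 - y 1)^2 * sgn (y 0 - y 1)) * ((1 / Real.sqrt 2) *
          phi ((y 0 - y 1) / (Real.sqrt 2 * c)) * α ((y 0 + y 1) / 2)) from by ring,
      sq_sgn_eq]
    ring_nf
    rfl
  rw [hG.fderiv, hA, det_formula]
  have he0 : ∀ (i j : Fin 2), (EuclideanSpace.single (i : Fin 2) (1:ℝ)) j
      = if j = i then 1 else 0 := fun i j => EuclideanSpace.single_apply i 1 j
  have hLe : L (EuclideanSpace.single 0 1) - L (EuclideanSpace.single 1 1) =
      2 * (α (s/2) * ((1 / Real.sqrt 2) *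
        ((2 * |d|) * phi u + (d * |d|) * (phiD u * (Real.sqrt 2 * c)⁻¹)))) := by
    rw [hL]
    simp only [ContinuousLinearMap.add_apply, ContinuousLinearMap.coe_smul', Pi.smul_apply,
      smul_eq_mul]
    rw [hDapp, hDapp, hSapp, hSapp, he0, he0, he0, he0]
    norm_num
    ring
  rw [hLe, (hasDerivAt_phi u).deriv]
  field_simp
  linear_combination (-(α (s/2) * |d| * d * phiD u)) * hs2'
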